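/- arXiv:1411.0171 — 4 statements merged into one kernel-verified Lean document; each statement's English description precedes it below -/
import Mathlib

section
/- If f : ℂ → E is admissible and has boundary Lipschitz constants (M_0, M_1), then for every positive integer n, every j ∈ {0,1} and every t ∈ ℝ one has ‖f_n(j + it)‖_E ≤ e^{1/n} M_j. -/
open Complex

/-!
On the line `Re z = a` with `|a| ≤ 1` one has `|e^{z²/n}| = e^{(a² − t²)/n} ≤ e^{1/n}`, while the
Lipschitz bound along that line gives `‖f(z − i/n) − f(z)‖ ≤ M/n`; the factor `n` cancels.
-/

/-- The paper's `f_n`. -/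
noncomputable def gaussianDiffQuot {E : Type*} [NormedAddCommGroup E] [NormedSpace ℂ E]
    (f : ℂ → E) (n : ℕ) (z : ℂ) : E :=
  (I * n * exp (z ^ 2 / n)) • (f (z - I / n) - f z)

theorem norm_exp_sq_div_le {z : ℂ} (hz : |z.re| ≤ 1) {r : ℝ} (hr : 0 < r) :
    ‖exp (z ^ 2 / r)‖ ≤ Real.exp (1 / r) := by
  have hsq : (z ^ 2).re ≤ 1 := by
    rw [sq, mul_re]
    nlinarith [sq_le_one_iff_abs_le_one z.re |>.mpr hz, mul_self_nonneg z.im]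
  rw [norm_exp, div_ofReal_re, Real.exp_le_exp]
  gcongr

theorem norm_gaussianDiffQuot_le {E : Type*} [NormedAddCommGroup E] [NormedSpace ℂ E]
    {f : ℂ → E} {a M : ℝ} (ha : |a| ≤ 1)
    (hf : ∀ s t : ℝ, ‖f (a + t * I) - f (a + s * I)‖ ≤ M * |t - s|)
    {n : ℕ} (hn : 0 < n) (t : ℝ) :
    ‖gaussianDiffQuot f n (a + t * I)‖ ≤ Real.exp (1 / n) * M := by
  have hn' : (0 : ℝ) < n := Nat.cast_pos.mpr hn
  have hfactor : ‖I * n * exp ((a + t * I) ^ 2 / n)‖ ≤ n * Real.exp (1 / n) := by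
    rw [norm_mul, norm_mul, norm_I, one_mul, norm_natCast, ← ofReal_natCast]
    gcongr
    exact norm_exp_sq_div_le (by simpa using ha) hn'
  have hstep : ‖f (a + t * I - I / n) - f (a + t * I)‖ ≤ M * (1 / n) := by
    have hshift : (a : ℂ) + t * I - I / n = a + ((t - 1 / n : ℝ) : ℂ) * I := by
      push_cast
      ring
    have hdist : |(t - 1 / n) - t| = 1 / n := by
      rw [sub_sub_cancel_left, abs_neg, abs_of_pos (by positivity)]
    simpa only [hshift, hdist] using hf t (t - 1 / n)
  calc ‖gaussianDiffQuot f n (a + t * I)‖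
      ≤ n * Real.exp (1 / n) * (M * (1 / n)) := by
        rw [gaussianDiffQuot, norm_smul]
        exact mul_le_mul hfactor hstep (norm_nonneg _) (by positivity)
    _ = Real.exp (1 / n) * M := by
        field_simp

theorem fn_boundary_bound_general
    {E : Type*} [NormedAddCommGroup E] [NormedSpace ℂ E]
    (f : ℂ → E)
    (M₀ M₁ : ℝ)
    (hL₀ : ∀ s t : ℝ, ‖f (t * Complex.I) - f (s * Complex.I)‖ ≤ M₀ * |t - s|)
    (hL₁ : ∀ s t : ℝ,
      ‖f (1 + t * Complex.I) - f (1 + s * Complex.I)‖ ≤ M₁ * |t - s|)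
    (n : ℕ) (hn : 0 < n) (t : ℝ) :
    ‖(Complex.I * n * Complex.exp ((t * Complex.I) ^ 2 / n)) •
        (f (t * Complex.I - Complex.I / n) - f (t * Complex.I))‖ ≤
      Real.exp (1 / n) * M₀ ∧
    ‖(Complex.I * n * Complex.exp ((1 + t * Complex.I) ^ 2 / n)) •
        (f (1 + t * Complex.I - Complex.I / n) - f (1 + t * Complex.I))‖ ≤
      Real.exp (1 / n) * M₁ := by
  constructor
  · simpa [gaussianDiffQuot] using
      norm_gaussianDiffQuot_le (a := 0) (by simp) (by simpa using hL₀) hn t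
  · simpa [gaussianDiffQuot] using
      norm_gaussianDiffQuot_le (a := 1) (by simp) (by simpa using hL₁) hn t

/-- If `f : ℂ → E` is admissible and has boundary Lipschitz constants
`(M₀, M₁)`, i.e. `‖f(j+it) − f(j+is)‖ ≤ M_j |t−s|` for all real `s, t` and `j = 0, 1`,
then for every positive integer `n`, every `j ∈ {0,1}` and every `t ∈ ℝ`,
`‖f_n(j + it)‖ ≤ e^{1/n} M_j`, where `f_n(z) = i n e^{z²/n} (f(z − i/n) − f(z))`. -/
theorem fn_boundary_bound
    {E : Type*} [NormedAddCommGroup E] [NormedSpace ℂ E] [CompleteSpace E]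
    (f : ℂ → E)
    (hBdd : ∃ C : ℝ, ∀ z ∈ {z : ℂ | 0 ≤ z.re ∧ z.re ≤ 1}, ‖f z‖ ≤ C)
    (hCont : ContinuousOn f {z : ℂ | 0 ≤ z.re ∧ z.re ≤ 1})
    (hAnal : DifferentiableOn ℂ f {z : ℂ | 0 < z.re ∧ z.re < 1})
    (M₀ M₁ : ℝ) (hM₀ : 0 ≤ M₀) (hM₁ : 0 ≤ M₁)
    (hL₀ : ∀ s t : ℝ, ‖f (t * Complex.I) - f (s * Complex.I)‖ ≤ M₀ * |t - s|)
    (hL₁ : ∀ s t : ℝ,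
      ‖f (1 + t * Complex.I) - f (1 + s * Complex.I)‖ ≤ M₁ * |t - s|)
    (n : ℕ) (hn : 0 < n) (t : ℝ) :
    ‖(Complex.I * n * Complex.exp ((t * Complex.I) ^ 2 / n)) •
        (f (t * Complex.I - Complex.I / n) - f (t * Complex.I))‖ ≤
      Real.exp (1 / n) * M₀ ∧
    ‖(Complex.I * n * Complex.exp ((1 + t * Complex.I) ^ 2 / n)) •
        (f (1 + t * Complex.I - Complex.I / n) - f (1 + t * Complex.I))‖ ≤
      Real.exp (1 / n) * M₁ :=
  fn_boundary_bound_general f M₀ M₁ hL₀ hL₁ n hn t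
end

section
/- If f : ℂ → E is admissible and has boundary Lipschitz constants (M_0, M_1) with M_0 > 0 and M_1 > 0, then for every positive integer n and every z ∈ S one has ‖f_n(z)‖_E ≤ e^{1/n} M_0^{1 − Re z} M_1^{Re z}. -/
/-!
Apply the Hadamard three-lines theorem to `f_n` itself. On each boundary line `Re z = j` the
difference `f (z - i/n) - f z` has norm at most `M_j / n`, which the factor `n` cancels, while the
Gaussian factor has modulus `e^{(Re z² - Im z²)/n} ≤ e^{(Re z)²/n}`, i.e. at most `1` on `Re z = 0`
and `e^{1/n}` on `Re z = 1`. Three lines then give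
`‖f_n z‖ ≤ M₀^{1 - Re z} (e^{1/n} M₁)^{Re z} ≤ e^{1/n} M₀^{1 - Re z} M₁^{Re z}`.
-/

open Complex Set HadamardThreeLines

lemma re_sub_I_div_natCast (w : ℂ) (n : ℕ) : (w - I / n).re = w.re := by
  simp [div_re]

lemma mapsTo_sub_I_div_natCast_preimage_re (s : Set ℝ) (n : ℕ) :
    MapsTo (· - I / n) (re ⁻¹' s) (re ⁻¹' s) := fun w hw => by
  simpa [mem_preimage, re_sub_I_div_natCast] using hw

section

variable {E : Type*} [NormedAddCommGroup E]

lemma norm_sub_shift_le_of_vertical_lipschitz {f : ℂ → E} {x M : ℝ}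
    (hL : ∀ s t : ℝ, ‖f (x + t * I) - f (x + s * I)‖ ≤ M * |t - s|) (n : ℕ) {w : ℂ}
    (hw : w.re = x) : ‖f (w - I / n) - f w‖ ≤ M / n := by
  have hw_eq : w = x + w.im * I := by apply Complex.ext <;> simp [hw]
  have hshift_eq : w - I / n = x + ((w.im - 1 / n : ℝ) : ℂ) * I := by
    apply Complex.ext <;> simp [hw, div_re, div_im]
  calc ‖f (w - I / n) - f w‖ ≤ M * |w.im - 1 / n - w.im| := by
        rw [hshift_eq]; nth_rw 2 [hw_eq]; exact hL _ _
    _ = M / n := by rw [sub_sub_cancel_left, abs_neg, abs_of_nonneg (by positivity), mul_one_div]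

variable [NormedSpace ℂ E]

/-- The paper's `f_n`. -/
noncomputable def dampedDiffQuot (f : ℂ → E) (n : ℕ) (z : ℂ) : E :=
  (I * n * cexp (z ^ 2 / n)) • (f (z - I / n) - f z)

lemma norm_cexp_sq_div_le (w : ℂ) {c : ℝ} (hc : 0 ≤ c) :
    ‖cexp (w ^ 2 / c)‖ ≤ Real.exp (w.re ^ 2 / c) := by
  rw [norm_exp, div_ofReal_re, sq, mul_re, ← sq, ← sq]
  gcongr
  exact sub_le_self _ (sq_nonneg _)

lemma norm_dampedDiffQuot_le (f : ℂ → E) (n : ℕ) (w : ℂ) :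
    ‖dampedDiffQuot f n w‖ ≤ n * Real.exp (w.re ^ 2 / n) * ‖f (w - I / n) - f w‖ := by
  rw [dampedDiffQuot, norm_smul, norm_mul, norm_mul, norm_I, one_mul, norm_natCast,
    ← ofReal_natCast]
  gcongr
  exact norm_cexp_sq_div_le w n.cast_nonneg

lemma norm_dampedDiffQuot_le_of_vertical_lipschitz {f : ℂ → E} {x M : ℝ} (hM : 0 ≤ M)
    (hL : ∀ s t : ℝ, ‖f (x + t * I) - f (x + s * I)‖ ≤ M * |t - s|) (n : ℕ) {w : ℂ}
    (hw : w.re = x) : ‖dampedDiffQuot f n w‖ ≤ Real.exp (x ^ 2 / n) * M := by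
  have hcancel : (n : ℝ) * (M / n) ≤ M := by
    rcases n.eq_zero_or_pos with rfl | hn
    · simpa using hM
    · rw [mul_div_cancel₀ _ (by positivity)]
  calc ‖dampedDiffQuot f n w‖ ≤ n * Real.exp (x ^ 2 / n) * (M / n) := by
        rw [← hw]
        refine (norm_dampedDiffQuot_le f n w).trans ?_
        gcongr
        exact norm_sub_shift_le_of_vertical_lipschitz hL n hw
    _ = Real.exp (x ^ 2 / n) * (n * (M / n)) := by ring
    _ ≤ Real.exp (x ^ 2 / n) * M := by gcongr

lemma diffContOnCl_dampedDiffQuot {f : ℂ → E} {l u : ℝ}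
    (hCont : ContinuousOn f (verticalClosedStrip l u))
    (hAnal : DifferentiableOn ℂ f (verticalStrip l u)) (n : ℕ) :
    DiffContOnCl ℂ (dampedDiffQuot f n) (verticalStrip l u) := by
  have hcoeff : Differentiable ℂ fun w : ℂ => I * n * cexp (w ^ 2 / n) := by fun_prop
  have hshift : Differentiable ℂ fun w : ℂ => w - I / n := by fun_prop
  have hclosure : closure (verticalStrip l u) ⊆ verticalClosedStrip l u :=
    closure_minimal (preimage_mono Ioo_subset_Icc_self) (isClosed_Icc.preimage continuous_re)
  refine ⟨hcoeff.differentiableOn.smul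
    ((hAnal.comp hshift.differentiableOn (mapsTo_sub_I_div_natCast_preimage_re _ n)).sub hAnal),
    ContinuousOn.mono ?_ hclosure⟩
  exact hcoeff.continuous.continuousOn.smul
    ((hCont.comp hshift.continuous.continuousOn (mapsTo_sub_I_div_natCast_preimage_re _ n)).sub
      hCont)

lemma bddAbove_norm_dampedDiffQuot {f : ℂ → E} {C : ℝ}
    (hC : ∀ z ∈ verticalClosedStrip 0 1, ‖f z‖ ≤ C) (n : ℕ) :
    BddAbove ((norm ∘ dampedDiffQuot f n) '' verticalClosedStrip 0 1) := by
  refine ⟨n * Real.exp (1 / n) * (C + C), ?_⟩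
  rintro _ ⟨w, hw, rfl⟩
  have hre : w.re ^ 2 ≤ 1 := pow_le_one₀ hw.1 hw.2
  calc ‖dampedDiffQuot f n w‖ ≤ n * Real.exp (w.re ^ 2 / n) * ‖f (w - I / n) - f w‖ :=
        norm_dampedDiffQuot_le f n w
    _ ≤ n * Real.exp (1 / n) * (C + C) := by
        gcongr
        exact (norm_sub_le _ _).trans
          (add_le_add (hC _ (mapsTo_sub_I_div_natCast_preimage_re _ n hw)) (hC w hw))

lemma rpow_one_sub_mul_exp_mul_rpow_le {a b c x : ℝ} (ha : 0 ≤ a) (hb : 0 ≤ b) (hc : 0 ≤ c)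
    (hx : x ≤ 1) : a ^ (1 - x) * (Real.exp c * b) ^ x ≤ Real.exp c * a ^ (1 - x) * b ^ x := by
  rw [Real.mul_rpow (Real.exp_nonneg _) hb, ← Real.exp_mul, mul_left_comm, ← mul_assoc]
  gcongr
  exact mul_le_of_le_one_right hc hx

end

theorem fn_strip_interpolated_bound_general
    {E : Type*} [NormedAddCommGroup E] [NormedSpace ℂ E]
    (f : ℂ → E)
    (hBdd : ∃ C : ℝ, ∀ z ∈ {z : ℂ | 0 ≤ z.re ∧ z.re ≤ 1}, ‖f z‖ ≤ C)
    (hCont : ContinuousOn f {z : ℂ | 0 ≤ z.re ∧ z.re ≤ 1})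
    (hAnal : DifferentiableOn ℂ f {z : ℂ | 0 < z.re ∧ z.re < 1})
    (M₀ M₁ : ℝ) (hM₀ : 0 < M₀) (hM₁ : 0 < M₁)
    (hL₀ : ∀ s t : ℝ, ‖f (t * Complex.I) - f (s * Complex.I)‖ ≤ M₀ * |t - s|)
    (hL₁ : ∀ s t : ℝ,
      ‖f (1 + t * Complex.I) - f (1 + s * Complex.I)‖ ≤ M₁ * |t - s|)
    (n : ℕ) (z : ℂ) (hz : 0 ≤ z.re ∧ z.re ≤ 1) :
    ‖(Complex.I * n * Complex.exp (z ^ 2 / n)) •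
        (f (z - Complex.I / n) - f z)‖ ≤
      Real.exp (1 / n) * M₀ ^ (1 - z.re) * M₁ ^ z.re := by
  obtain ⟨C, hC⟩ := hBdd
  have h₀ : ∀ w ∈ re ⁻¹' {0}, ‖dampedDiffQuot f n w‖ ≤ M₀ := fun w hw => by
    simpa using norm_dampedDiffQuot_le_of_vertical_lipschitz hM₀.le (x := 0) (by simpa using hL₀)
      n hw
  have h₁ : ∀ w ∈ re ⁻¹' {1}, ‖dampedDiffQuot f n w‖ ≤ Real.exp (1 / n) * M₁ := fun w hw => by
    simpa using norm_dampedDiffQuot_le_of_vertical_lipschitz hM₁.le (x := 1) (by simpa using hL₁)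
      n hw
  calc ‖dampedDiffQuot f n z‖
      ≤ M₀ ^ (1 - z.re) * (Real.exp (1 / n) * M₁) ^ z.re :=
        norm_le_interp_of_mem_verticalClosedStrip₀₁' _ hz
          (diffContOnCl_dampedDiffQuot hCont hAnal n) (bddAbove_norm_dampedDiffQuot hC n) h₀ h₁
    _ ≤ Real.exp (1 / n) * M₀ ^ (1 - z.re) * M₁ ^ z.re :=
        rpow_one_sub_mul_exp_mul_rpow_le hM₀.le hM₁.le (by positivity) hz.2

/-- If `f : ℂ → E` is admissible and has boundary Lipschitz constants
`(M₀, M₁)` with `M₀ > 0` and `M₁ > 0`, then for every positive integer `n` and every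
`z` in the closed strip `S`, `‖f_n(z)‖ ≤ e^{1/n} M₀^{1 − Re z} M₁^{Re z}`, where
`f_n(z) = i n e^{z²/n} (f(z − i/n) − f(z))`. -/
theorem fn_strip_interpolated_bound
    {E : Type*} [NormedAddCommGroup E] [NormedSpace ℂ E] [CompleteSpace E]
    (f : ℂ → E)
    (hBdd : ∃ C : ℝ, ∀ z ∈ {z : ℂ | 0 ≤ z.re ∧ z.re ≤ 1}, ‖f z‖ ≤ C)
    (hCont : ContinuousOn f {z : ℂ | 0 ≤ z.re ∧ z.re ≤ 1})
    (hAnal : DifferentiableOn ℂ f {z : ℂ | 0 < z.re ∧ z.re < 1})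
    (M₀ M₁ : ℝ) (hM₀ : 0 < M₀) (hM₁ : 0 < M₁)
    (hL₀ : ∀ s t : ℝ, ‖f (t * Complex.I) - f (s * Complex.I)‖ ≤ M₀ * |t - s|)
    (hL₁ : ∀ s t : ℝ,
      ‖f (1 + t * Complex.I) - f (1 + s * Complex.I)‖ ≤ M₁ * |t - s|)
    (n : ℕ) (hn : 0 < n) (z : ℂ) (hz : 0 ≤ z.re ∧ z.re ≤ 1) :
    ‖(Complex.I * n * Complex.exp (z ^ 2 / n)) •
        (f (z - Complex.I / n) - f z)‖ ≤
      Real.exp (1 / n) * M₀ ^ (1 - z.re) * M₁ ^ z.re :=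
  fn_strip_interpolated_bound_general f hBdd hCont hAnal M₀ M₁ hM₀ hM₁ hL₀ hL₁ n z hz
end

section
/- If f : ℂ → E is admissible and has boundary Lipschitz constants (M_0, M_1), then for every θ ∈ S° the derivative satisfies ‖f′(θ)‖_E ≤ max(M_0, M_1). -/
/-!
For a fixed real `h`, the difference `w ↦ f (w + h * I) - f w` is bounded and holomorphic on the
strip, and on each boundary line the Lipschitz bound makes it at most `max M₀ M₁ * |h|`; by the
Phragmén–Lindelöf principle the same bound holds inside. So every vertical line
`t ↦ f (θ + t * I)` in the strip is `max M₀ M₁`-Lipschitz, and its derivative at `0` is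
`I • deriv f θ`, which has the same norm as `deriv f θ`.
-/

open Complex Set Bornology
open scoped NNReal

section

variable {E : Type*} [NormedAddCommGroup E]

theorem norm_sub_le_of_lipschitzWith_vertical {f : ℂ → E} {x : ℝ} {M : ℝ≥0}
    (hf : LipschitzWith M fun t : ℝ => f (x + t * I)) (h : ℝ) {w : ℂ} (hw : w.re = x) :
    ‖f (w + h * I) - f w‖ ≤ M * |h| := by
  have hw' : w = x + w.im * I := by apply Complex.ext <;> simp [hw]
  have hshift : w + h * I = x + ((w.im + h : ℝ) : ℂ) * I := by apply Complex.ext <;> simp [hw]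
  simpa [hshift, ← hw', dist_eq_norm, Real.dist_eq] using hf.dist_le_mul (w.im + h) w.im

variable [NormedSpace ℂ E]

theorem norm_le_of_isBounded_vertical_strip {g : ℂ → E} {a b C : ℝ}
    (hd : DiffContOnCl ℂ g (re ⁻¹' Ioo a b)) (hbdd : IsBounded (g '' (re ⁻¹' Ioo a b)))
    (ha : ∀ z : ℂ, z.re = a → ‖g z‖ ≤ C) (hb : ∀ z : ℂ, z.re = b → ‖g z‖ ≤ C)
    {z : ℂ} (hz : z.re ∈ Icc a b) : ‖g z‖ ≤ C := by
  rcases hz.1.eq_or_lt with hza | hza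
  · exact ha z hza.symm
  obtain ⟨B, hB⟩ := hbdd.exists_norm_le
  refine PhragmenLindelof.vertical_strip hd ⟨0, by have := hza.trans_le hz.2; positivity, 0, ?_⟩
    ha hb hz.1 hz.2
  refine Asymptotics.IsBigO.of_bound B (Filter.eventually_inf_principal.2 ?_)
  exact Filter.Eventually.of_forall fun w hw => by simpa using hB _ (mem_image_of_mem g hw)

theorem lipschitzWith_vertical_of_strip {f : ℂ → E} {a b : ℝ} {M : ℝ≥0}
    (hd : DiffContOnCl ℂ f (re ⁻¹' Ioo a b)) (hbdd : IsBounded (f '' (re ⁻¹' Ioo a b)))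
    (ha : LipschitzWith M fun t : ℝ => f (a + t * I))
    (hb : LipschitzWith M fun t : ℝ => f (b + t * I))
    {z : ℂ} (hz : z.re ∈ Icc a b) : LipschitzWith M fun t : ℝ => f (z + t * I) := by
  refine LipschitzWith.of_dist_le_mul fun t s => ?_
  set h : ℝ := t - s
  have hmaps : MapsTo (· + h * I) (re ⁻¹' Ioo a b) (re ⁻¹' Ioo a b) := fun w hw => by
    simpa using hw
  have hgd : DiffContOnCl ℂ (fun w => f (w + h * I) - f w) (re ⁻¹' Ioo a b) :=
    (hd.comp (differentiable_id.add_const _).diffContOnCl hmaps).sub hd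
  have hgbdd : IsBounded ((fun w => f (w + h * I) - f w) '' (re ⁻¹' Ioo a b)) := by
    obtain ⟨B, hB⟩ := hbdd.exists_norm_le
    refine isBounded_iff_forall_norm_le.2 ⟨B + B, forall_mem_image.2 fun w hw => ?_⟩
    exact (norm_sub_le _ _).trans (add_le_add (hB _ (mem_image_of_mem f (hmaps hw)))
      (hB _ (mem_image_of_mem f hw)))
  have key := norm_le_of_isBounded_vertical_strip hgd hgbdd
    (fun w hw => norm_sub_le_of_lipschitzWith_vertical ha h hw)
    (fun w hw => norm_sub_le_of_lipschitzWith_vertical hb h hw) (z := z + s * I) (by simpa using hz)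
  have ht : z + s * I + h * I = z + t * I := by simp only [h]; push_cast; ring
  simpa [ht, dist_eq_norm, Real.dist_eq] using key

theorem norm_deriv_le_of_lipschitzWith_vertical {f : ℂ → E} {z : ℂ} {M : ℝ≥0}
    (hf : DifferentiableAt ℂ f z) (hM : LipschitzWith M fun t : ℝ => f (z + t * I)) :
    ‖deriv f z‖ ≤ M := by
  have hline : HasDerivAt (fun t : ℝ => z + t * I) I 0 := by
    simpa using ((hasDerivAt_id (0 : ℝ)).ofReal_comp.mul_const I).const_add z
  have hderiv : HasDerivAt (fun t : ℝ => f (z + t * I)) (I • deriv f z) 0 :=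
    HasDerivAt.scomp (0 : ℝ) (by simpa using hf.hasDerivAt) hline
  simpa [hderiv.deriv, norm_smul] using norm_deriv_le_of_lipschitz (x₀ := 0) hM

end

theorem deriv_max_bound_general
    {E : Type*} [NormedAddCommGroup E] [NormedSpace ℂ E]
    (f : ℂ → E)
    (hBdd : ∃ C : ℝ, ∀ z ∈ {z : ℂ | 0 ≤ z.re ∧ z.re ≤ 1}, ‖f z‖ ≤ C)
    (hCont : ContinuousOn f {z : ℂ | 0 ≤ z.re ∧ z.re ≤ 1})
    (hAnal : DifferentiableOn ℂ f {z : ℂ | 0 < z.re ∧ z.re < 1})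
    (M₀ M₁ : ℝ) (hM₀ : 0 ≤ M₀)
    (hL₀ : ∀ s t : ℝ, ‖f (t * Complex.I) - f (s * Complex.I)‖ ≤ M₀ * |t - s|)
    (hL₁ : ∀ s t : ℝ,
      ‖f (1 + t * Complex.I) - f (1 + s * Complex.I)‖ ≤ M₁ * |t - s|)
    (θ : ℂ) (hθ : 0 < θ.re ∧ θ.re < 1) :
    ‖deriv f θ‖ ≤ max M₀ M₁ := by
  obtain ⟨M, hM⟩ : ∃ M : ℝ≥0, (M : ℝ) = max M₀ M₁ := ⟨⟨_, le_max_of_le_left hM₀⟩, rfl⟩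
  have hd : DiffContOnCl ℂ f (re ⁻¹' Ioo 0 1) :=
    ⟨hAnal, by rwa [closure_preimage_re, closure_Ioo zero_ne_one]⟩
  have hbdd : IsBounded (f '' (re ⁻¹' Ioo 0 1)) := by
    obtain ⟨C, hC⟩ := hBdd
    exact isBounded_iff_forall_norm_le.2
      ⟨C, forall_mem_image.2 fun z hz => hC z ⟨hz.1.le, hz.2.le⟩⟩
  have h₀ : LipschitzWith M fun t : ℝ => f ((0 : ℝ) + t * I) :=
    LipschitzWith.of_dist_le_mul fun t s => by
      simpa [hM, dist_eq_norm, Real.dist_eq] using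
        (hL₀ s t).trans (mul_le_mul_of_nonneg_right (le_max_left M₀ M₁) (abs_nonneg _))
  have h₁ : LipschitzWith M fun t : ℝ => f ((1 : ℝ) + t * I) :=
    LipschitzWith.of_dist_le_mul fun t s => by
      simpa [hM, dist_eq_norm, Real.dist_eq] using
        (hL₁ s t).trans (mul_le_mul_of_nonneg_right (le_max_right M₀ M₁) (abs_nonneg _))
  have hθ' : DifferentiableAt ℂ f θ :=
    hAnal.differentiableAt ((isOpen_Ioo.preimage continuous_re).mem_nhds hθ)
  exact hM ▸ norm_deriv_le_of_lipschitzWith_vertical hθ'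
    (lipschitzWith_vertical_of_strip hd hbdd h₀ h₁ ⟨hθ.1.le, hθ.2.le⟩)

/-- If `f : ℂ → E` is admissible and has boundary Lipschitz constants
`(M₀, M₁)`, then for every `θ` in the open strip `S°` the derivative satisfies
`‖f′(θ)‖ ≤ max(M₀, M₁)`. -/
theorem deriv_max_bound
    {E : Type*} [NormedAddCommGroup E] [NormedSpace ℂ E] [CompleteSpace E]
    (f : ℂ → E)
    (hBdd : ∃ C : ℝ, ∀ z ∈ {z : ℂ | 0 ≤ z.re ∧ z.re ≤ 1}, ‖f z‖ ≤ C)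
    (hCont : ContinuousOn f {z : ℂ | 0 ≤ z.re ∧ z.re ≤ 1})
    (hAnal : DifferentiableOn ℂ f {z : ℂ | 0 < z.re ∧ z.re < 1})
    (M₀ M₁ : ℝ) (hM₀ : 0 ≤ M₀) (hM₁ : 0 ≤ M₁)
    (hL₀ : ∀ s t : ℝ, ‖f (t * Complex.I) - f (s * Complex.I)‖ ≤ M₀ * |t - s|)
    (hL₁ : ∀ s t : ℝ,
      ‖f (1 + t * Complex.I) - f (1 + s * Complex.I)‖ ≤ M₁ * |t - s|)
    (θ : ℂ) (hθ : 0 < θ.re ∧ θ.re < 1) :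
    ‖deriv f θ‖ ≤ max M₀ M₁ :=
  deriv_max_bound_general f hBdd hCont hAnal M₀ M₁ hM₀ hL₀ hL₁ θ hθ
end

section
/- If f : ℂ → E is admissible and has boundary Lipschitz constants (M_0, M_1) with M_0 > 0 and M_1 > 0, then for every θ ∈ S° the derivative satisfies ‖f′(θ)‖_E ≤ M_0^{1 − Re θ} M_1^{Re θ}. -/
open Complex Complex.HadamardThreeLines Set Filter Topology

/-!
For real `t ≠ 0` the vertical difference quotient `z ↦ (f (z + t i) - f z) / (t i)` is again
bounded, continuous on the closed strip and holomorphic inside, and the boundary Lipschitz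
conditions bound it by `M₀` on `Re z = 0` and by `M₁` on `Re z = 1`. Hadamard's three lines
theorem bounds it by `M₀ ^ (1 - Re θ) * M₁ ^ Re θ` at `θ`, and letting `t → 0` gives the bound
for `f' θ`.
-/

section VerticalSlope

variable {E : Type*} [NormedAddCommGroup E] [NormedSpace ℂ E] {f : ℂ → E}

theorem diffContOnCl_verticalStrip {a b : ℝ} (hc : ContinuousOn f (verticalClosedStrip a b))
    (hd : DifferentiableOn ℂ f (verticalStrip a b)) : DiffContOnCl ℂ f (verticalStrip a b) :=
  ⟨hd, hc.mono <| closure_minimal (preimage_mono Ioo_subset_Icc_self)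
    (isClosed_Icc.preimage continuous_re)⟩

theorem norm_slope_vertical (f : ℂ → E) (z : ℂ) (t : ℝ) :
    ‖slope f z (z + t * I)‖ = |t|⁻¹ * ‖f (z + t * I) - f z‖ := by
  simp [slope_def_module, norm_smul]

theorem DiffContOnCl.slope_vertical {a b : ℝ} (hf : DiffContOnCl ℂ f (verticalStrip a b))
    (t : ℝ) : DiffContOnCl ℂ (fun z => slope f z (z + t * I)) (verticalStrip a b) := by
  simp only [slope_def_module, add_sub_cancel_left]
  have hshift : DiffContOnCl ℂ (· + t * I) (verticalStrip a b) :=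
    (by fun_prop : Differentiable ℂ (· + t * I)).diffContOnCl
  exact ((hf.comp hshift fun z hz => by simpa [verticalStrip] using hz).sub hf).const_smul _

theorem bddAbove_norm_slope_vertical {a b : ℝ}
    (hB : BddAbove ((norm ∘ f) '' verticalClosedStrip a b)) (t : ℝ) :
    BddAbove ((norm ∘ fun z => slope f z (z + t * I)) '' verticalClosedStrip a b) := by
  obtain ⟨C, hC⟩ := hB
  refine ⟨|t|⁻¹ * (C + C), ?_⟩
  rintro _ ⟨z, hz, rfl⟩
  have hz' : z + t * I ∈ verticalClosedStrip a b := by simpa [verticalClosedStrip] using hz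
  rw [Function.comp_apply, norm_slope_vertical]
  gcongr
  exact (norm_sub_le _ _).trans
    (add_le_add (hC (mem_image_of_mem _ hz')) (hC (mem_image_of_mem _ hz)))

theorem norm_slope_vertical_le_of_lipschitz {x M : ℝ}
    (hL : ∀ s t : ℝ, ‖f (x + t * I) - f (x + s * I)‖ ≤ M * |t - s|) {t : ℝ} (ht : t ≠ 0) :
    ∀ z ∈ re ⁻¹' {x}, ‖slope f z (z + t * I)‖ ≤ M := by
  intro z hz
  obtain ⟨y, rfl⟩ : ∃ y : ℝ, z = x + y * I :=
    ⟨z.im, Complex.ext (by simpa using hz) (by simp)⟩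
  have hshift : (x : ℂ) + y * I + t * I = x + ((y + t : ℝ) : ℂ) * I := by push_cast; ring
  have hLt : ‖f (x + ((y + t : ℝ) : ℂ) * I) - f (x + y * I)‖ ≤ M * |t| := by
    simpa using hL y (y + t)
  calc ‖slope f (x + y * I) (x + y * I + t * I)‖
      = |t|⁻¹ * ‖f (x + ((y + t : ℝ) : ℂ) * I) - f (x + y * I)‖ := by
        rw [norm_slope_vertical, hshift]
    _ ≤ |t|⁻¹ * (M * |t|) := by gcongr
    _ = M := by field_simp

theorem norm_slope_vertical_le_interp {M₀ M₁ t : ℝ} {z : ℂ}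
    (hd : DiffContOnCl ℂ f (verticalStrip 0 1))
    (hB : BddAbove ((norm ∘ f) '' verticalClosedStrip 0 1))
    (h₀ : ∀ w ∈ re ⁻¹' {0}, ‖slope f w (w + t * I)‖ ≤ M₀)
    (h₁ : ∀ w ∈ re ⁻¹' {1}, ‖slope f w (w + t * I)‖ ≤ M₁)
    (hz : z ∈ verticalClosedStrip 0 1) :
    ‖slope f z (z + t * I)‖ ≤ M₀ ^ (1 - z.re) * M₁ ^ z.re :=
  norm_le_interp_of_mem_verticalClosedStrip₀₁' _ hz (hd.slope_vertical t)
    (bddAbove_norm_slope_vertical hB t) h₀ h₁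

theorem norm_deriv_le_of_norm_slope_vertical_le {θ : ℂ} {K : ℝ} (hf : DifferentiableAt ℂ f θ)
    (hK : ∀ t : ℝ, t ≠ 0 → ‖slope f θ (θ + t * I)‖ ≤ K) : ‖deriv f θ‖ ≤ K := by
  have hline : Tendsto (fun t : ℝ => θ + t * I) (𝓝[≠] 0) (𝓝[≠] θ) := by
    refine tendsto_nhdsWithin_of_tendsto_nhds_of_eventually_within _ ?_ ?_
    · exact ((by fun_prop : Continuous fun t : ℝ => θ + t * I).tendsto' 0 θ (by simp)).mono_left
        nhdsWithin_le_nhds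
    · filter_upwards [self_mem_nhdsWithin] with t ht
      simpa using ht
  have hslope := (hasDerivAt_iff_tendsto_slope.mp hf.hasDerivAt).comp hline
  exact le_of_tendsto hslope.norm (eventually_nhdsWithin_of_forall hK)

end VerticalSlope

theorem deriv_interpolated_bound_general
    {E : Type*} [NormedAddCommGroup E] [NormedSpace ℂ E]
    (f : ℂ → E)
    (hBdd : ∃ C : ℝ, ∀ z ∈ {z : ℂ | 0 ≤ z.re ∧ z.re ≤ 1}, ‖f z‖ ≤ C)
    (hCont : ContinuousOn f {z : ℂ | 0 ≤ z.re ∧ z.re ≤ 1})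
    (hAnal : DifferentiableOn ℂ f {z : ℂ | 0 < z.re ∧ z.re < 1})
    (M₀ M₁ : ℝ)
    (hL₀ : ∀ s t : ℝ, ‖f (t * Complex.I) - f (s * Complex.I)‖ ≤ M₀ * |t - s|)
    (hL₁ : ∀ s t : ℝ,
      ‖f (1 + t * Complex.I) - f (1 + s * Complex.I)‖ ≤ M₁ * |t - s|)
    (θ : ℂ) (hθ : 0 < θ.re ∧ θ.re < 1) :
    ‖deriv f θ‖ ≤ M₀ ^ (1 - θ.re) * M₁ ^ θ.re := by
  obtain ⟨C, hC⟩ := hBdd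
  have hB : BddAbove ((norm ∘ f) '' verticalClosedStrip 0 1) := ⟨C, forall_mem_image.2 hC⟩
  have hθ' : verticalStrip 0 1 ∈ 𝓝 θ := (isOpen_Ioo.preimage continuous_re).mem_nhds hθ
  refine norm_deriv_le_of_norm_slope_vertical_le (hAnal.differentiableAt hθ') fun t ht => ?_
  refine norm_slope_vertical_le_interp (diffContOnCl_verticalStrip hCont hAnal) hB
    (norm_slope_vertical_le_of_lipschitz (x := 0) (fun s t => ?_) ht)
    (norm_slope_vertical_le_of_lipschitz (x := 1) (fun s t => ?_) ht) ⟨hθ.1.le, hθ.2.le⟩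
  · simpa using hL₀ s t
  · simpa using hL₁ s t

/-- If `f : ℂ → E` is admissible and has boundary Lipschitz constants
`(M₀, M₁)` with `M₀ > 0` and `M₁ > 0`, then for every `θ` in the open strip `S°`
the derivative satisfies `‖f′(θ)‖ ≤ M₀^{1 − Re θ} M₁^{Re θ}`. -/
theorem deriv_interpolated_bound
    {E : Type*} [NormedAddCommGroup E] [NormedSpace ℂ E] [CompleteSpace E]
    (f : ℂ → E)
    (hBdd : ∃ C : ℝ, ∀ z ∈ {z : ℂ | 0 ≤ z.re ∧ z.re ≤ 1}, ‖f z‖ ≤ C)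
    (hCont : ContinuousOn f {z : ℂ | 0 ≤ z.re ∧ z.re ≤ 1})
    (hAnal : DifferentiableOn ℂ f {z : ℂ | 0 < z.re ∧ z.re < 1})
    (M₀ M₁ : ℝ) (hM₀ : 0 < M₀) (hM₁ : 0 < M₁)
    (hL₀ : ∀ s t : ℝ, ‖f (t * Complex.I) - f (s * Complex.I)‖ ≤ M₀ * |t - s|)
    (hL₁ : ∀ s t : ℝ,
      ‖f (1 + t * Complex.I) - f (1 + s * Complex.I)‖ ≤ M₁ * |t - s|)
    (θ : ℂ) (hθ : 0 < θ.re ∧ θ.re < 1) :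
    ‖deriv f θ‖ ≤ M₀ ^ (1 - θ.re) * M₁ ^ θ.re :=
  deriv_interpolated_bound_general f hBdd hCont hAnal M₀ M₁ hL₀ hL₁ θ hθ
end
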